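/- Let 0 < ε < 1 and let c : ℤ×ℤ → ℝ be a function with c(m,n) ≥ 0 for all (m,n) and c(m,n) = 0 whenever |m+nτ′| > τ. Let k be a real number of the form k = (q−pτ′)/√5 with p, q ∈ ℤ and |(pτ−q)/√5| ≤ ε/(2πτ). Suppose I ∈ ℝ and J ∈ ℂ are such that, as N → ∞ along the positive integers, (1/(2N))·Σ_{(m,n)∈ℤ²: |m+nτ| ≤ N, |m+nτ′| ≤ τ} c(m,n) → I and (1/(2N))·Σ_{(m,n)∈ℤ²: |m+nτ| ≤ N, |m+nτ′| ≤ τ} exp(−2πi(m+nτ)k)·c(m,n) → J. Then Re J ≥ (1−ε)·I. -/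

import Mathlib

noncomputable def tau : ℝ := (1 + Real.sqrt 5) / 2
noncomputable def tau' : ℝ := (1 - Real.sqrt 5) / 2

/-!
Write `x = m + nτ` and `x⋆ = m + nτ'`. Since `τ - τ' = √5`, the frequency
`k = (q - pτ')/√5` satisfies `x k = (mp + nq) - x⋆ δ` with `δ = (pτ - q)/√5`, so the phase
`e^{-2πi x k}` equals `e^{2πi x⋆ δ}`. On the window `|x⋆| ≤ τ` with `|δ| ≤ ε/(2πτ)` its
angle has modulus at most `ε`, so its real part is at least `1 - ε`. As `c ≥ 0`, every
averaged sum for `J` has real part at least `1 - ε` times the one for `I`, and the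
inequality passes to the limit.
-/

open Real

lemma one_sub_abs_le_cos (x : ℝ) : 1 - |x| ≤ cos x := by
  have := abs_cos_sub_cos_le x 0
  rw [cos_zero, sub_zero] at this
  linarith [neg_abs_le (cos x - 1)]

lemma one_sub_le_cos_two_pi_mul {X x y δ : ℝ} (hX : 0 < X) (hx : |x| ≤ X)
    (hδ : |δ| ≤ y / (2 * π * X)) : 1 - y ≤ cos (2 * π * (x * δ)) := by
  have hθ : |2 * π * (x * δ)| ≤ y := calc
    |2 * π * (x * δ)| = 2 * π * (|x| * |δ|) := by
      rw [abs_mul, abs_mul, abs_mul, abs_two, abs_of_pos pi_pos]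
    _ ≤ 2 * π * (X * (y / (2 * π * X))) := by gcongr
    _ = y := by field_simp [hX.ne', pi_pos.ne']
  linarith [one_sub_abs_le_cos (2 * π * (x * δ))]

lemma re_exp_neg_two_pi_I_mul_ofReal (x c : ℝ) :
    (Complex.exp (-2 * π * Complex.I * (x : ℂ)) * (c : ℂ)).re = cos (2 * π * x) * c := by
  rw [Complex.re_mul_ofReal,
    show -2 * π * Complex.I * (x : ℂ) = ((-(2 * π * x) : ℝ) : ℂ) * Complex.I by push_cast; ring,
    Complex.exp_ofReal_mul_I_re, cos_neg]

lemma mul_tsum_le_re_tsum {S : Type*} [Finite S] {a t : ℝ} (ht : 0 ≤ t) {g : S → ℝ}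
    {f : S → ℂ} (h : ∀ s, a * g s ≤ (f s).re) :
    a * (t * ∑' s, g s) ≤ ((t : ℂ) * ∑' s, f s).re := by
  rw [Complex.re_ofReal_mul, Complex.re_tsum (Summable.of_finite (f := f)), mul_left_comm,
    ← tsum_mul_left]
  exact mul_le_mul_of_nonneg_left (Summable.tsum_le_tsum h .of_finite .of_finite) ht

lemma tau_pos : 0 < tau := by
  unfold tau; positivity

lemma tau_sub_tau' : tau - tau' = √5 := by
  unfold tau tau'; ring

lemma abs_tau'_lt_one : |tau'| < 1 := by
  have h2 : 2 < √5 := (lt_sqrt zero_le_two).2 (by norm_num)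
  have h3 : √5 < 3 := (sqrt_lt' three_pos).2 (by norm_num)
  unfold tau'
  rw [abs_lt]
  constructor <;> linarith

lemma finite_setOf_abs_add_mul_tau_le (A B : ℝ) :
    {r : ℤ × ℤ | |(r.1 : ℝ) + r.2 * tau| ≤ A ∧ |(r.1 : ℝ) + r.2 * tau'| ≤ B}.Finite := by
  have hbdd : Bornology.IsBounded
      {r : ℤ × ℤ | |(r.1 : ℝ) + r.2 * tau| ≤ A ∧ |(r.1 : ℝ) + r.2 * tau'| ≤ B} := by
    refine isBounded_iff_forall_norm_le.2 ⟨A + 2 * B, fun ⟨m, n⟩ ⟨hA, hB⟩ => ?_⟩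
    have hn : |(n : ℝ)| ≤ A + B := by
      have : |(n : ℝ)| * √5 ≤ A + B := by
        rw [← abs_of_pos (sqrt_pos.2 (by norm_num : (0 : ℝ) < 5)), ← abs_mul, ← tau_sub_tau',
          show (n : ℝ) * (tau - tau') = (m + n * tau) - (m + n * tau') by ring]
        exact (abs_sub _ _).trans (add_le_add hA hB)
      nlinarith [abs_nonneg (n : ℝ), one_le_sqrt.2 (by norm_num : (1 : ℝ) ≤ 5)]
    have hm : |(m : ℝ)| ≤ A + 2 * B := by
      have : |(m : ℝ)| ≤ |(m : ℝ) + n * tau'| + |(n : ℝ)| * |tau'| := by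
        rw [← abs_mul]; simpa using abs_sub ((m : ℝ) + n * tau') (n * tau')
      nlinarith [abs_nonneg (n : ℝ), abs_nonneg tau', abs_tau'_lt_one]
    simp only [Prod.norm_def, Int.norm_eq_abs, max_le_iff]
    exact ⟨hm, by linarith [abs_nonneg ((m : ℝ) + n * tau')]⟩
  simpa using Metric.finite_isBounded_inter_isClosed DiscreteTopology.isDiscrete hbdd
    (isClosed_univ (X := ℤ × ℤ))

lemma add_mul_tau_mul_dual (m n p q : ℤ) :
    ((m : ℝ) + n * tau) * ((q - p * tau') / √5)
      = ((m * p + n * q : ℤ) : ℝ) - ((m : ℝ) + n * tau') * ((p * tau - q) / √5) := by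
  have h5 : √5 ≠ 0 := by positivity
  field_simp
  rw [← tau_sub_tau']
  push_cast
  ring

lemma cos_two_pi_mul_add_mul_tau_mul_dual (m n p q : ℤ) :
    cos (2 * π * (((m : ℝ) + n * tau) * ((q - p * tau') / √5)))
      = cos (2 * π * (((m : ℝ) + n * tau') * ((p * tau - q) / √5))) := by
  rw [add_mul_tau_mul_dual, ← cos_neg,
    ← cos_sub_int_mul_two_pi (2 * π * (((m : ℝ) + n * tau') * ((p * tau - q) / √5)))
      (m * p + n * q)]
  congr 1
  ring

theorem bragg_peak_high_intensity_fibonacci_general (ε : ℝ)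
    (c : ℤ × ℤ → ℝ)
    (hc0 : ∀ r, 0 ≤ c r)
    (p q : ℤ) (k : ℝ)
    (hk : k = ((q : ℝ) - p * tau') / Real.sqrt 5)
    (hpq : |((p : ℝ) * tau - q) / Real.sqrt 5| ≤ ε / (2 * Real.pi * tau))
    (I₀ : ℝ) (J : ℂ)
    (hI : Filter.Tendsto
      (fun N : ℕ => (1 / (2 * (N : ℝ))) *
        ∑' r : {r : ℤ × ℤ //
            |(r.1 : ℝ) + r.2 * tau| ≤ N ∧ |(r.1 : ℝ) + r.2 * tau'| ≤ tau},
          c r)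
      Filter.atTop (nhds I₀))
    (hJ : Filter.Tendsto
      (fun N : ℕ => (1 / (2 * (N : ℝ)) : ℂ) *
        ∑' r : {r : ℤ × ℤ //
            |(r.1 : ℝ) + r.2 * tau| ≤ N ∧ |(r.1 : ℝ) + r.2 * tau'| ≤ tau},
          Complex.exp (-2 * Real.pi * Complex.I *
            ((((r.1.1 : ℝ) + r.1.2 * tau) * k : ℝ) : ℂ)) * (c r : ℂ))
      Filter.atTop (nhds J)) :
    (1 - ε) * I₀ ≤ J.re := by
  refine le_of_tendsto_of_tendsto' (hI.const_mul (1 - ε))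
    ((Complex.continuous_re.tendsto J).comp hJ) fun N => ?_
  have : Finite {r : ℤ × ℤ //
      |(r.1 : ℝ) + r.2 * tau| ≤ N ∧ |(r.1 : ℝ) + r.2 * tau'| ≤ tau} :=
    (finite_setOf_abs_add_mul_tau_le N tau).to_subtype
  have hN : (1 / (2 * (N : ℝ)) : ℂ) = ((1 / (2 * (N : ℝ)) : ℝ) : ℂ) := by simp
  rw [Function.comp_apply, hN]
  refine mul_tsum_le_re_tsum (by positivity) fun ⟨(m, n), _, hstar⟩ => ?_
  rw [re_exp_neg_two_pi_I_mul_ofReal, hk, cos_two_pi_mul_add_mul_tau_mul_dual]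
  exact mul_le_mul_of_nonneg_right (one_sub_le_cos_two_pi_mul tau_pos hstar hpq) (hc0 _)

/-- High-intensity Bragg peaks for subsets of the Fibonacci model set: if the
autocorrelation coefficients `c` are nonnegative and supported in `⋀([−τ,τ])`, the
averaged sums converge to `I` (at `0`) and `J` (at `k ∈ ⋀⋆([−ε/(2πτ), ε/(2πτ)])`),
then `Re J ≥ (1 − ε)·I`. -/
theorem bragg_peak_high_intensity_fibonacci (ε : ℝ) (hε0 : 0 < ε) (hε1 : ε < 1)
    (c : ℤ × ℤ → ℝ)
    (hc0 : ∀ r, 0 ≤ c r)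
    (hcsupp : ∀ r : ℤ × ℤ, tau < |(r.1 : ℝ) + r.2 * tau'| → c r = 0)
    (p q : ℤ) (k : ℝ)
    (hk : k = ((q : ℝ) - p * tau') / Real.sqrt 5)
    (hpq : |((p : ℝ) * tau - q) / Real.sqrt 5| ≤ ε / (2 * Real.pi * tau))
    (I₀ : ℝ) (J : ℂ)
    (hI : Filter.Tendsto
      (fun N : ℕ => (1 / (2 * (N : ℝ))) *
        ∑' r : {r : ℤ × ℤ //
            |(r.1 : ℝ) + r.2 * tau| ≤ N ∧ |(r.1 : ℝ) + r.2 * tau'| ≤ tau},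
          c r)
      Filter.atTop (nhds I₀))
    (hJ : Filter.Tendsto
      (fun N : ℕ => (1 / (2 * (N : ℝ)) : ℂ) *
        ∑' r : {r : ℤ × ℤ //
            |(r.1 : ℝ) + r.2 * tau| ≤ N ∧ |(r.1 : ℝ) + r.2 * tau'| ≤ tau},
          Complex.exp (-2 * Real.pi * Complex.I *
            ((((r.1.1 : ℝ) + r.1.2 * tau) * k : ℝ) : ℂ)) * (c r : ℂ))
      Filter.atTop (nhds J)) :
    (1 - ε) * I₀ ≤ J.re :=
  bragg_peak_high_intensity_fibonacci_general ε c hc0 p q k hk hpq I₀ J hI hJ
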